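/- Let X be a nonempty finite set and let C : Δ²(X) → [0,∞) be bounded Borel measurable with C(δ_μ) = 0 for every μ, satisfying Axiom 1 (Blackwell monotonicity) and Axiom 2 (subadditivity). Then the indirect cost coincides with C: for every π ∈ Δ²(X), every replication process for π has total cost at least C(π), and the infimum of total costs over all replication processes for π equals C(π), i.e. φ(C)(π) = C(π). -/

import Mathlib

set_option linter.unusedSectionVars false

open MeasureTheory

namespace IC

variable {X : Type*} [Fintype X] [Nonempty X]

/-- The belief simplex Δ(X). -/
abbrev Δ (X : Type*) [Fintype X] : Set (X → ℝ) := stdSimplex ℝ X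

/-- Δ²(X): Borel probability measures on Δ(X). -/
abbrev PM (X : Type*) [Fintype X] := ProbabilityMeasure (Δ X)

/-- Barycenter of π ∈ Δ²(X). -/
noncomputable def bar (π : PM X) : X → ℝ :=
  fun x => ∫ ν, (ν : X → ℝ) x ∂(π : Measure (Δ X))

lemma eval_integrable (π : PM X) (x : X) :
    Integrable (fun ν : Δ X => (ν : X → ℝ) x) (π : Measure (Δ X)) := by
  have hc : Continuous (fun ν : Δ X => (ν : X → ℝ) x) :=
    (continuous_apply x).comp continuous_subtype_val
  refine (integrable_const (1 : ℝ)).mono' hc.aestronglyMeasurable ?_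
  refine Filter.Eventually.of_forall fun ν => ?_
  rw [Real.norm_eq_abs, abs_of_nonneg (by exact ν.2.1 x)]
  calc (ν : X → ℝ) x ≤ ∑ y, (ν : X → ℝ) y :=
        Finset.single_le_sum (fun y _ => ν.2.1 y) (Finset.mem_univ x)
    _ = 1 := ν.2.2

lemma bar_mem (π : PM X) : bar π ∈ Δ X := by
  constructor
  · intro x; exact integral_nonneg fun ν => ν.2.1 x
  · calc ∑ x, bar π x
        = ∫ ν, ∑ x, (ν : X → ℝ) x ∂(π : Measure (Δ X)) :=
          (integral_finsetSum Finset.univ fun x _ => eval_integrable π x).symm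
      _ = ∫ _ν, (1 : ℝ) ∂(π : Measure (Δ X)) :=
          integral_congr_ae (Filter.Eventually.of_forall fun ν => ν.2.2)
      _ = 1 := by simp

/-- Barycenter as a point of the simplex. -/
noncomputable def barPt (π : PM X) : Δ X := ⟨bar π, bar_mem π⟩

/-- Dirac measure as an element of Δ²(X). -/
noncomputable def diracPM (μ : Δ X) : PM X := ⟨Measure.dirac μ, inferInstance⟩

lemma isProbabilityMeasure_bind {α β : Type*} [MeasurableSpace α] [MeasurableSpace β]
    (π : Measure α) [IsProbabilityMeasure π] (k : α → Measure β) (hk : Measurable k)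
    (hkp : ∀ a, IsProbabilityMeasure (k a)) : IsProbabilityMeasure (π.bind k) := by
  constructor
  rw [Measure.bind_apply MeasurableSet.univ hk.aemeasurable]
  have h1 : ∀ a, k a Set.univ = 1 := fun a => (hkp a).measure_univ
  simp [h1]

/-- The Borel σ-algebra on probability measures (generated by evaluations, via the
canonical σ-algebra on measures). -/
instance instMeasurableSpacePM {Ω : Type*} [MeasurableSpace Ω] :
    MeasurableSpace (ProbabilityMeasure Ω) :=
  MeasurableSpace.comap (fun μ => (μ : Measure Ω)) inferInstance

lemma measurable_pmCoe {Ω : Type*} [MeasurableSpace Ω] :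
    Measurable (fun μ : ProbabilityMeasure Ω => (μ : Measure Ω)) :=
  measurable_iff_comap_le.mpr le_rfl

/-- Composition π∘k of an information structure with a (Borel measurable) kernel. -/
noncomputable def comp (π : PM X) (k : Δ X → PM X) (hk : Measurable k) : PM X :=
  ⟨(π : Measure (Δ X)).bind (fun μ => (k μ : Measure (Δ X))),
    isProbabilityMeasure_bind _ _ (measurable_pmCoe.comp hk) (fun μ => (k μ).2)⟩

/-- ∫ π dP(π), for P a probability measure over Δ²(X). -/
noncomputable def joinPM (P : ProbabilityMeasure (PM X)) : PM X :=
  ⟨(P : Measure (PM X)).bind (fun π => (π : Measure (Δ X))),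
    isProbabilityMeasure_bind _ _ measurable_pmCoe (fun π => π.2)⟩

/-- A kernel is mean preserving π-a.e. -/
def MeanPreservingAE (π : PM X) (k : Δ X → PM X) : Prop :=
  ∀ᵐ μ ∂(π : Measure (Δ X)), bar (k μ) = (μ : X → ℝ)

/-- Axiom 1: Blackwell monotonicity. -/
def Axiom1 (C : PM X → ℝ) : Prop :=
  ∀ (π : PM X) (k : Δ X → PM X) (hk : Measurable k),
    MeanPreservingAE π k → C π ≤ C (comp π k hk)

/-- Axiom 2: subadditivity. -/
def Axiom2 (C : PM X → ℝ) : Prop :=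
  ∀ (π : PM X) (k : Δ X → PM X) (hk : Measurable k),
    C (comp π k hk) ≤ C π + ∫ μ, C (k μ) ∂(π : Measure (Δ X))

/-- The class 𝒞 of direct information cost functions. -/
structure ClassC (C : PM X → ℝ) : Prop where
  nonneg : ∀ π, 0 ≤ C π
  bounded : ∃ M : ℝ, ∀ π, C π ≤ M
  measurable : Measurable C
  dirac_zero : ∀ μ : Δ X, C (diracPM μ) = 0
  mixing : ∀ P : ProbabilityMeasure (PM X),
    (∃ μ₀ : X → ℝ, ∀ᵐ π ∂(P : Measure (PM X)), bar π = μ₀) →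
    C (joinPM P) ≤ ∫ π, C π ∂(P : Measure (PM X))
  contOn : ∀ X' : Set X, ContinuousOn C {π : PM X | {x | 0 < bar π x} = X'}

/-- A replication process for π. -/
structure RepProcess (π : PM X) where
  T : ℕ
  seq : ℕ → PM X
  k : ℕ → Δ X → PM X
  r : ℕ → Δ X → PM X
  k_meas : ∀ t, Measurable (k t)
  r_meas : ∀ t, Measurable (r t)
  init : seq 0 = diracPM (barPt π)
  final : seq (2 * T) = π
  k_mp : ∀ t, t < T → MeanPreservingAE (seq (2 * t)) (k t)
  k_comp : ∀ t, (ht : t < T) → seq (2 * t + 1) = comp (seq (2 * t)) (k t) (k_meas t)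
  r_mp : ∀ t, t < T → MeanPreservingAE (seq (2 * t + 2)) (r t)
  r_comp : ∀ t, (ht : t < T) → seq (2 * t + 1) = comp (seq (2 * t + 2)) (r t) (r_meas t)

/-- Total cost of a replication process. -/
noncomputable def totalCost (C : PM X → ℝ) {π : PM X} (R : RepProcess π) : ℝ :=
  ∑ t ∈ Finset.range R.T, ∫ μ, C (R.k t μ) ∂((R.seq (2 * t) : Measure (Δ X)))

/-- The indirect cost φ(C). -/
noncomputable def phi (C : PM X → ℝ) (π : PM X) : ℝ :=
  sInf (Set.range fun R : RepProcess π => totalCost C R)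

/-- Uniformly posterior separable cost. -/
def UPS (C : PM X → ℝ) : Prop :=
  ∃ H : (X → ℝ) → ℝ, ConvexOn ℝ (Δ X) H ∧
    ∀ π : PM X, C π = (∫ ν, H (ν : X → ℝ) ∂(π : Measure (Δ X))) - H (bar π)


/-! Along a replication process, Blackwell monotonicity for the garbling `r_t` and subadditivity
for the experiment `k_t` give `C π_{2t+2} ≤ C π_{2t+1} ≤ C π_{2t} + (cost of stage t)`; telescoping
from `C π₀ = C δ_{bar π} = 0` bounds `C π` by the total cost. The one-stage process that acquires
`π` outright and then does nothing costs exactly `C π`. -/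

lemma measurable_diracPM : Measurable (diracPM : Δ X → PM X) :=
  measurable_comap_iff.2 Measure.measurable_dirac

lemma coe_diracPM (μ : Δ X) : (diracPM μ : Measure (Δ X)) = Measure.dirac μ := rfl

lemma bar_diracPM (μ : Δ X) : bar (diracPM μ) = μ := by
  funext x
  simp [bar, coe_diracPM]

lemma diracPM_comp (μ : Δ X) (k : Δ X → PM X) (hk : Measurable k) :
    comp (diracPM μ) k hk = k μ :=
  Subtype.ext (Measure.dirac_bind (measurable_pmCoe.comp hk) μ)

lemma comp_diracPM (π : PM X) : comp π diracPM measurable_diracPM = π :=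
  Subtype.ext Measure.bind_dirac

namespace RepProcess

variable {π : PM X}

noncomputable def direct (π : PM X) : RepProcess π where
  T := 1
  seq n := if n = 0 then diracPM (barPt π) else π
  k _ _ := π
  r _ := diracPM
  k_meas _ := measurable_const
  r_meas _ := measurable_diracPM
  init := rfl
  final := rfl
  k_mp t ht := by
    obtain rfl : t = 0 := by omega
    simp only [MeanPreservingAE, mul_zero, if_pos, coe_diracPM, ae_dirac_eq]
    rfl
  k_comp t ht := by
    obtain rfl : t = 0 := by omega
    exact (diracPM_comp (barPt π) (fun _ => π) measurable_const).symm
  r_mp _ _ := Filter.Eventually.of_forall bar_diracPM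
  r_comp t ht := by
    obtain rfl : t = 0 := by omega
    exact (comp_diracPM π).symm

lemma totalCost_direct (C : PM X → ℝ) (π : PM X) : totalCost C (direct π) = C π := by
  simp [totalCost, direct]

variable {C : PM X → ℝ}

lemma cost_seq_succ_le (h1 : Axiom1 C) (h2 : Axiom2 C) (R : RepProcess π) {t : ℕ}
    (ht : t < R.T) :
    C (R.seq (2 * (t + 1))) ≤
      C (R.seq (2 * t)) + ∫ μ, C (R.k t μ) ∂(R.seq (2 * t) : Measure (Δ X)) :=
  calc C (R.seq (2 * (t + 1)))
      ≤ C (R.seq (2 * t + 1)) := R.r_comp t ht ▸ h1 _ _ (R.r_meas t) (R.r_mp t ht)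
    _ ≤ C (R.seq (2 * t)) + ∫ μ, C (R.k t μ) ∂(R.seq (2 * t) : Measure (Δ X)) :=
      R.k_comp t ht ▸ h2 _ _ (R.k_meas t)

lemma cost_seq_le_sum (hdirac : ∀ μ : Δ X, C (diracPM μ) = 0) (h1 : Axiom1 C)
    (h2 : Axiom2 C) (R : RepProcess π) {t : ℕ} (ht : t ≤ R.T) :
    C (R.seq (2 * t)) ≤
      ∑ s ∈ Finset.range t, ∫ μ, C (R.k s μ) ∂(R.seq (2 * s) : Measure (Δ X)) := by
  induction t with
  | zero => simp [R.init, hdirac]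
  | succ t ih =>
    rw [Finset.sum_range_succ]
    linarith [ih (by omega), R.cost_seq_succ_le h1 h2 (t := t) (by omega)]

lemma cost_le_totalCost (hdirac : ∀ μ : Δ X, C (diracPM μ) = 0) (h1 : Axiom1 C)
    (h2 : Axiom2 C) (R : RepProcess π) : C π ≤ totalCost C R := by
  have h := R.cost_seq_le_sum hdirac h1 h2 le_rfl
  rwa [R.final] at h

end RepProcess

theorem indirect_eq_of_mono_subadd_general (C : PM X → ℝ)
    (hdirac : ∀ μ : Δ X, C (diracPM μ) = 0)
    (h1 : Axiom1 C) (h2 : Axiom2 C) (π : PM X) :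
    (∀ R : RepProcess π, C π ≤ totalCost C R) ∧ phi C π = C π := by
  have lower (R : RepProcess π) : C π ≤ totalCost C R := R.cost_le_totalCost hdirac h1 h2
  refine ⟨lower, IsLeast.csInf_eq ⟨⟨.direct π, RepProcess.totalCost_direct C π⟩, ?_⟩⟩
  rintro _ ⟨R, rfl⟩
  exact lower R

/-- if C is bounded, Borel measurable, vanishes on Dirac measures, and
satisfies Axiom 1 (Blackwell monotonicity) and Axiom 2 (subadditivity), then every
replication process for π costs at least C(π), and the indirect cost coincides with C. -/
theorem indirect_eq_of_mono_subadd (C : PM X → ℝ)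
    (hnonneg : ∀ π : PM X, 0 ≤ C π) (hbdd : ∃ M : ℝ, ∀ π : PM X, C π ≤ M)
    (hmeas : Measurable C) (hdirac : ∀ μ : Δ X, C (diracPM μ) = 0)
    (h1 : Axiom1 C) (h2 : Axiom2 C) (π : PM X) :
    (∀ R : RepProcess π, C π ≤ totalCost C R) ∧ phi C π = C π :=
  indirect_eq_of_mono_subadd_general C hdirac h1 h2 π

end IC
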